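/- For every x > 1, φ(x,x,x,x,x,x) = (x³ + 2x² + x)/(2x³ + 3x² − 1). Moreover there exists a unique x₀ ∈ (1,∞) such that (x₀³ + 2x₀² + x₀)/(2x₀³ + 3x₀² − 1) = √3/2. -/
import Mathlib


open Real

/-- The cosine of the dihedral angle at the edge `e₁` of a generalized hyper-ideal
tetrahedron whose edge lengths `lᵢ` satisfy `cosh lᵢ = xᵢ`. -/
noncomputable def phi (x1 x2 x3 x4 x5 x6 : ℝ) : ℝ :=
  (x2 * x3 + x5 * x6 + x1 * x2 * x5 + x1 * x3 * x6 - x1 ^ 2 * x4 + x4) /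
    (Real.sqrt (2 * x1 * x2 * x6 + x1 ^ 2 + x2 ^ 2 + x6 ^ 2 - 1) *
      Real.sqrt (2 * x1 * x3 * x5 + x1 ^ 2 + x3 ^ 2 + x5 ^ 2 - 1))

lemma ratio_simp (x : ℝ) (hx : 1 < x) :
    (x ^ 3 + 2 * x ^ 2 + x) / (2 * x ^ 3 + 3 * x ^ 2 - 1) = x / (2 * x - 1) := by
  have hB : (2 * x ^ 3 + 3 * x ^ 2 - 1) ≠ 0 := by nlinarith
  have h2 : (2 * x - 1) ≠ 0 := by nlinarith
  rw [div_eq_div_iff hB h2]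
  ring

theorem phi_regular_value_and_unique_root :
    (∀ x : ℝ, 1 < x →
        phi x x x x x x = (x ^ 3 + 2 * x ^ 2 + x) / (2 * x ^ 3 + 3 * x ^ 2 - 1)) ∧
      ∃! x0 : ℝ, 1 < x0 ∧
        (x0 ^ 3 + 2 * x0 ^ 2 + x0) / (2 * x0 ^ 3 + 3 * x0 ^ 2 - 1) = Real.sqrt 3 / 2 := by
  have hs2 : Real.sqrt 3 ^ 2 = 3 := Real.sq_sqrt (by norm_num)
  have hs0 : 0 ≤ Real.sqrt 3 := Real.sqrt_nonneg 3
  have hs1 : 1 < Real.sqrt 3 := by nlinarith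
  set s := Real.sqrt 3 with hsdef
  constructor
  · intro x hx
    unfold phi
    have ha : (0:ℝ) ≤ 2 * x ^ 3 + 3 * x ^ 2 - 1 := by nlinarith
    rw [show (2 * x * x * x + x ^ 2 + x ^ 2 + x ^ 2 - 1) = 2 * x ^ 3 + 3 * x ^ 2 - 1 from by
      ring, Real.mul_self_sqrt ha]
    congr 1
    ring
  · refine ⟨(3 + s) / 4, ⟨by nlinarith, ?_⟩, ?_⟩
    · rw [ratio_simp _ (by nlinarith)]
      rw [div_eq_div_iff (by nlinarith) two_ne_zero]
      nlinarith
    · rintro y ⟨hy, hval⟩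
      rw [ratio_simp _ hy] at hval
      rw [div_eq_div_iff (by nlinarith) two_ne_zero] at hval
      -- y * 2 = s * (2 * y - 1)
      have h : y * (2 * s - 2) = ((3 + s) / 4) * (2 * s - 2) := by nlinarith
      have hne : (2 * s - 2) ≠ 0 := by nlinarith
      exact mul_right_cancel₀ hne h
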